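/- Let O be an order of M and let 𝔞 be a ℤ-lattice in M with O·𝔞 ⊆ 𝔞 (a fractional O-ideal). Then the following are equivalent: (1) 𝔞 is projective as an O-module; (2) 𝔞 is locally principal, i.e. for every maximal ideal 𝔪 of O the localization 𝔞_𝔪 is a cyclic (principal) O_𝔪-module; (3) 𝔞 is a proper O-ideal, i.e. {α ∈ M : α·𝔞 ⊆ 𝔞} = O. -/

import Mathlib

set_option synthInstance.maxHeartbeats 1000000
set_option maxHeartbeats 1000000

variable (M : Type*) [Field M] [NumberField M]

/-- The multiplier ring `R(𝔞) = {α ∈ M : α·𝔞 ⊆ 𝔞}` of a `ℤ`-submodule `𝔞 ⊆ M`. -/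
def multiplierRing (𝔞 : Submodule ℤ M) : Subring M where
  carrier := {α : M | ∀ x ∈ 𝔞, α * x ∈ 𝔞}
  mul_mem' := fun {a b} ha hb x hx => by rw [mul_assoc]; exact ha _ (hb x hx)
  one_mem' := fun x hx => by simpa using hx
  add_mem' := fun {a b} ha hb x hx => by rw [add_mul]; exact 𝔞.add_mem (ha x hx) (hb x hx)
  zero_mem' := fun x hx => by simpa using 𝔞.zero_mem
  neg_mem' := fun {a} ha x hx => by rw [neg_mul]; exact 𝔞.neg_mem (ha x hx)

/-- A fractional `O`-ideal `𝔞 ⊆ M`, viewed as a module over the order `O`. -/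
def idealModule (O : Subring M) (𝔞 : Submodule ℤ M)
    (hstab : ∀ r ∈ O, ∀ x ∈ 𝔞, r * x ∈ 𝔞) : Submodule O M where
  carrier := 𝔞
  add_mem' := fun ha hb => 𝔞.add_mem ha hb
  zero_mem' := 𝔞.zero_mem
  smul_mem' := fun r x hx => by
    rw [Subring.smul_def]
    exact hstab r r.2 x hx

section Aux

variable {M}

/-- Invertibility data for a lattice: finitely many elements of the lattice and
"inverse" multipliers summing to `1`. -/
def HasInvData (O : Subring M) (𝔞 : Submodule ℤ M) : Prop :=
  ∃ (n : ℕ) (x q : Fin n → M), (∀ i, x i ∈ 𝔞) ∧ (∀ i, ∀ y ∈ 𝔞, q i * y ∈ O) ∧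
    ∑ i, q i * x i = 1

theorem mem_multiplierRing {𝔞 : Submodule ℤ M} {α : M} :
    α ∈ multiplierRing M 𝔞 ↔ ∀ x ∈ 𝔞, α * x ∈ 𝔞 := Iff.rfl

theorem aux_denom {O : Subring M} (hOspan : Submodule.span ℚ (O : Set M) = ⊤) (m : M) :
    ∃ k : ℤ, k ≠ 0 ∧ ∃ r ∈ O, (k : M) * m = r := by
  have hm : m ∈ Submodule.span ℚ (O : Set M) := hOspan ▸ Submodule.mem_top
  induction hm using Submodule.span_induction with
  | mem x hx => exact ⟨1, one_ne_zero, x, hx, by push_cast; ring⟩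
  | zero => exact ⟨1, one_ne_zero, 0, O.zero_mem, by simp⟩
  | add x y hx hy ihx ihy =>
    obtain ⟨k1, hk1, r1, hr1, e1⟩ := ihx
    obtain ⟨k2, hk2, r2, hr2, e2⟩ := ihy
    refine ⟨k1 * k2, mul_ne_zero hk1 hk2,
      (k2 : M) * r1 + (k1 : M) * r2,
      O.add_mem (O.mul_mem (intCast_mem O k2) hr1) (O.mul_mem (intCast_mem O k1) hr2), ?_⟩
    push_cast
    rw [← e1, ← e2]; ring
  | smul q x hx ih =>
    obtain ⟨k, hk, r, hr, e⟩ := ih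
    refine ⟨(q.den : ℤ) * k, mul_ne_zero (by exact_mod_cast q.den_nz) hk,
      (q.num : M) * r, O.mul_mem (intCast_mem O q.num) hr, ?_⟩
    have hden : (q.den : M) ≠ 0 := by
      exact_mod_cast (Nat.cast_ne_zero (R := M)).mpr q.den_nz
    rw [Rat.smul_def, ← e]
    push_cast
    have hq : (q.den : M) * (q : M) = (q.num : M) := by
      rw [Rat.cast_def]; field_simp
    calc (q.den : M) * k * ((q:M) * x) = ((q.den:M) * (q:M)) * ((k:M) * x) := by ring
    _ = (q.num : M) * ((k:M)*x) := by rw [hq]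

theorem aux_inv_to_proper {O : Subring M} {𝔞 : Submodule ℤ M}
    (hstab : ∀ r ∈ O, ∀ x ∈ 𝔞, r * x ∈ 𝔞) (hinv : HasInvData O 𝔞) :
    multiplierRing M 𝔞 = O := by
  obtain ⟨n, x, q, hx, hq, hsum⟩ := hinv
  ext α
  rw [mem_multiplierRing]
  constructor
  · intro hα
    have hrw : α = ∑ i, q i * (α * x i) := by
      calc α = α * ∑ i, q i * x i := by rw [hsum, mul_one]
      _ = ∑ i, q i * (α * x i) := by rw [Finset.mul_sum]; exact Finset.sum_congr rfl fun i _ => by ring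
    rw [hrw]
    exact Subring.sum_mem _ fun i _ => hq i _ (hα _ (hx i))
  · intro hα y hy
    exact hstab α hα y hy

theorem aux_exists_ne_zero' {𝔞 : Submodule ℤ M} (hspan : Submodule.span ℚ (𝔞 : Set M) = ⊤) :
    ∃ x ∈ 𝔞, x ≠ (0 : M) := by
  by_contra h
  push_neg at h
  have hsub : (𝔞 : Set M) ⊆ {0} := fun x hx => h x hx
  have hle := Submodule.span_mono (R := ℚ) hsub
  rw [hspan, Submodule.span_singleton_eq_bot.mpr rfl] at hle
  exact absurd (top_le_iff.mp hle) (by simp)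

theorem aux_bilin {O : Subring M} (hOspan : Submodule.span ℚ (O : Set M) = ⊤)
    {𝔞 : Submodule ℤ M} (hstab : ∀ r ∈ O, ∀ x ∈ 𝔞, r * x ∈ 𝔞)
    (f : idealModule M O 𝔞 hstab →ₗ[O] O) (y z : idealModule M O 𝔞 hstab) :
    ((f y : O) : M) * (z : M) = ((f z : O) : M) * (y : M) := by
  by_cases hz : (z : M) = 0
  · have h0 : z = 0 := Subtype.ext hz
    rw [h0, map_zero]
    simp [hz]
  · obtain ⟨k, hk, r, hr, e⟩ := aux_denom hOspan ((y : M) / (z : M))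
    rw [mul_div_assoc', div_eq_iff hz] at e
    -- e : (k:M) * y = r * z
    have hsmul : (k • y : idealModule M O 𝔞 hstab) = (⟨r, hr⟩ : O) • z := by
      apply Subtype.ext
      have c1 : ((k • y : idealModule M O 𝔞 hstab) : M) = (k : M) * (y : M) := by
        have h3 := map_zsmul ((idealModule M O 𝔞 hstab).subtype) k y
        simp only [Submodule.subtype_apply] at h3
        rw [h3, zsmul_eq_mul]
      have c2 : (((⟨r, hr⟩ : O) • z : idealModule M O 𝔞 hstab) : M) = r * (z : M) := by
        rw [SetLike.val_smul]; rfl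
      rw [c1, c2]
      exact e
    have hf : k • (f y) = (⟨r, hr⟩ : O) • (f z) := by
      rw [← map_zsmul f, hsmul, map_smul]
    have hfM : (k : M) * ((f y : O) : M) = r * ((f z : O) : M) := by
      have h2 := congrArg (fun t : O => (t : M)) hf
      simpa [Subring.smul_def] using h2
    have hkne : (k : M) ≠ 0 := Int.cast_ne_zero.mpr hk
    have key : (k : M) * (((f y : O) : M) * (z : M)) = (k : M) * (((f z : O) : M) * (y : M)) := by
      calc (k : M) * (((f y : O) : M) * (z : M)) = ((k : M) * ((f y : O) : M)) * (z:M) := by ring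
      _ = (r * ((f z : O):M)) * (z:M) := by rw [hfM]
      _ = ((f z : O):M) * (r * (z:M)) := by ring
      _ = ((f z : O):M) * ((k:M) * (y:M)) := by rw [e]
      _ = (k : M) * (((f z : O) : M) * (y : M)) := by ring
    exact mul_left_cancel₀ hkne key

theorem aux_proj_to_inv {O : Subring M} (hOspan : Submodule.span ℚ (O : Set M) = ⊤)
    {𝔞 : Submodule ℤ M} (hspan : Submodule.span ℚ (𝔞 : Set M) = ⊤)
    (hstab : ∀ r ∈ O, ∀ x ∈ 𝔞, r * x ∈ 𝔞)
    (hproj : Module.Projective O (idealModule M O 𝔞 hstab)) :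
    HasInvData O 𝔞 := by
  classical
  obtain ⟨s, hs⟩ := (Module.projective_def).mp hproj
  obtain ⟨x₀, hx₀mem, hx₀ne⟩ := aux_exists_ne_zero' hspan
  set p₀ : idealModule M O 𝔞 hstab := ⟨x₀, hx₀mem⟩ with hp₀
  set c : idealModule M O 𝔞 hstab →₀ O := s p₀ with hc
  have hcomb : ∑ p ∈ c.support, ((c p : O) : M) * (p : M) = x₀ := by
    have h1 : Finsupp.linearCombination O id c = p₀ := hs p₀
    have h2 : Finsupp.linearCombination O id c = ∑ p ∈ c.support, c p • p := by
      rw [Finsupp.linearCombination_apply]; rfl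
    rw [h2] at h1
    have h3 := congrArg (fun t : idealModule M O 𝔞 hstab => (t : M)) h1
    rw [show x₀ = (p₀ : M) from rfl, ← h3, Submodule.coe_sum]
    exact Finset.sum_congr rfl fun p _ => by rw [SetLike.val_smul]; rfl
  set n := c.support.card with hn
  set e := c.support.equivFin with he
  refine ⟨n, fun i => ((e.symm i : idealModule M O 𝔞 hstab) : M),
    fun i => ((c (e.symm i) : O) : M) / x₀, ?_, ?_, ?_⟩
  · exact fun i => (e.symm i : idealModule M O 𝔞 hstab).2
  · intro i y hy
    set p : idealModule M O 𝔞 hstab := (e.symm i : idealModule M O 𝔞 hstab)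
    have hb := aux_bilin hOspan hstab (Finsupp.lapply p ∘ₗ s) p₀ ⟨y, hy⟩
    simp only [LinearMap.comp_apply, Finsupp.lapply_apply] at hb
    have hrw : ((c p : O) : M) / x₀ * y = ((s ⟨y, hy⟩) p : M) := by
      rw [div_mul_eq_mul_div, hc]
      rw [hb]
      field_simp
      rfl
    rw [hrw]
    exact ((s ⟨y, hy⟩) p).2
  · calc ∑ i, ((c (e.symm i) : O) : M) / x₀ * ((e.symm i : idealModule M O 𝔞 hstab) : M)
        = ∑ i, (((c (e.symm i) : O) : M) * ((e.symm i : idealModule M O 𝔞 hstab) : M)) / x₀ :=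
          Finset.sum_congr rfl fun i _ => by rw [div_mul_eq_mul_div]
      _ = (∑ i, ((c (e.symm i) : O) : M) * ((e.symm i : idealModule M O 𝔞 hstab) : M)) / x₀ := by
          rw [Finset.sum_div]
      _ = (∑ p ∈ c.support, ((c p : O) : M) * (p : M)) / x₀ := by
          congr 1
          have h4 := Equiv.sum_comp e.symm
            (fun p : c.support => ((c (p : idealModule M O 𝔞 hstab) : O) : M) *
              ((p : idealModule M O 𝔞 hstab) : M))
          rw [h4]
          exact Finset.sum_coe_sort c.support
            (fun p : idealModule M O 𝔞 hstab => ((c p : O) : M) * (p : M))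
      _ = 1 := by rw [hcomb, div_self hx₀ne]

theorem aux_lattice_basis (hdeg : Module.finrank ℚ M = 2)
    {𝔞 : Submodule ℤ M} (hfg : 𝔞.FG) (hspan : Submodule.span ℚ (𝔞 : Set M) = ⊤) :
    ∃ α β : M, 𝔞 = Submodule.span ℤ {α, β} ∧
      ∀ p q : ℚ, (p : M) * α + (q : M) * β = 0 → p = 0 ∧ q = 0 := by
  classical
  haveI : Module.Finite ℤ ↥𝔞 := Module.Finite.iff_fg.mpr hfg
  haveI : NoZeroSMulDivisors ℤ ↥𝔞 := by
    constructor
    intro k x h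
    rcases eq_or_ne k 0 with hk | hk
    · exact Or.inl hk
    · right
      apply Subtype.ext
      have := congrArg (fun t : ↥𝔞 => (t : M)) h
      simp only [SetLike.val_smul, ZeroMemClass.coe_zero, zsmul_eq_mul] at this
      have hkM : (k : M) ≠ 0 := Int.cast_ne_zero.mpr hk
      simpa using (mul_eq_zero.mp this).resolve_left hkM
  haveI : Module.Free ℤ ↥𝔞 := Module.free_of_finite_type_torsion_free'
  set ι := Module.Free.ChooseBasisIndex ℤ ↥𝔞
  set b : Module.Basis ι ℤ ↥𝔞 := Module.Free.chooseBasis ℤ ↥𝔞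
  set v : ι → M := fun i => ((b i : ↥𝔞) : M) with hv
  have hvli : LinearIndependent ℤ v := by
    have := b.linearIndependent
    have h2 := this.map' 𝔞.subtype (Submodule.ker_subtype 𝔞)
    exact h2
  have hvliQ : LinearIndependent ℚ v := (LinearIndependent.iff_fractionRing ℤ ℚ).mp hvli
  have hvspanZ : Submodule.span ℤ (Set.range v) = 𝔞 := by
    have : Submodule.map 𝔞.subtype (Submodule.span ℤ (Set.range b)) =
        Submodule.span ℤ (Set.range v) := by
      rw [Submodule.map_span]
      congr 1
      ext x
      simp [hv]
    rw [b.span_eq, Submodule.map_top, Submodule.range_subtype] at this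
    exact this.symm
  have hvspanQ : ⊤ ≤ Submodule.span ℚ (Set.range v) := by
    rw [← hspan]
    apply Submodule.span_le.mpr
    intro x hx
    rw [← hvspanZ] at hx
    exact Submodule.span_subset_span ℤ ℚ _ hx
  let bQ : Module.Basis ι ℚ M := Module.Basis.mk hvliQ hvspanQ
  have hbQ : ∀ i, bQ i = v i := fun i => Module.Basis.mk_apply hvliQ hvspanQ i
  have hcard : Fintype.card ι = 2 := by
    rw [← hdeg, Module.finrank_eq_card_basis bQ]
  let e : ι ≃ Fin 2 := Fintype.equivFinOfCardEq hcard
  refine ⟨v (e.symm 0), v (e.symm 1), ?_, ?_⟩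
  · rw [← hvspanZ]
    congr 1
    ext x
    constructor
    · rintro ⟨i, rfl⟩
      have h01 : e i = 0 ∨ e i = 1 := by
        have : ∀ j : Fin 2, j = 0 ∨ j = 1 := by decide
        exact this (e i)
      rcases h01 with h | h
      · left; rw [← h, Equiv.symm_apply_apply]
      · right; rw [← h, Equiv.symm_apply_apply]; exact Set.mem_singleton _
    · rintro (rfl | rfl)
      · exact ⟨e.symm 0, rfl⟩
      · exact ⟨e.symm 1, rfl⟩
  · intro p q hpq
    have hli := Fintype.linearIndependent_iff.mp hvliQ (fun i => ![p, q] (e i))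
    have hsum : ∑ i : ι, ![p, q] (e i) • v i = 0 := by
      have hcomp := Equiv.sum_comp e.symm (fun i => ![p, q] (e i) • v i)
      rw [← hcomp]
      simp only [Equiv.apply_symm_apply]
      rw [Fin.sum_univ_two]
      simpa [Rat.smul_def] using hpq
    have hz := hli hsum
    constructor
    · have := hz (e.symm 0); simpa using this
    · have := hz (e.symm 1); simpa using this

theorem aux_quadratic (hdeg : Module.finrank ℚ M = 2) {α β : M}
    (hindep : ∀ p q : ℚ, (p : M) * α + (q : M) * β = 0 → p = 0 ∧ q = 0) :
    ∃ a b c : ℤ, Int.gcd (Int.gcd a b) c = 1 ∧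
      (a : M) * β ^ 2 + (b : M) * (α * β) + (c : M) * α ^ 2 = 0 := by
  classical
  have hα : α ≠ 0 := by
    intro h0
    have := hindep 1 0 (by rw [h0]; push_cast; ring)
    simp at this
  -- the three vectors β², αβ, α² are ℚ-linearly dependent
  have hdep : ¬ LinearIndependent ℚ ![β ^ 2, α * β, α ^ 2] := by
    intro h
    have := h.fintype_card_le_finrank
    rw [hdeg] at this
    simp at this
  obtain ⟨g, hgsum, i0, hgi0⟩ := Fintype.not_linearIndependent_iff.mp hdep
  rw [Fin.sum_univ_three] at hgsum
  simp only [Matrix.cons_val_zero, Matrix.cons_val_one, Matrix.head_cons,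
    Matrix.cons_val_two, Matrix.tail_cons, Rat.smul_def] at hgsum
  set p := g 0 with hp
  set q := g 1 with hq
  set r := g 2 with hr
  -- hgsum : p•β² + q•αβ + r•α² = 0
  have hpne : p ≠ 0 := by
    intro hp0
    have hzero : (q : M) * β + (r : M) * α = 0 := by
      rcases mul_eq_zero.mp (show α * ((q : M) * β + (r : M) * α) = 0 by
        rw [hp0] at hgsum; push_cast at hgsum ⊢; linear_combination hgsum) with h | h
      · exact absurd h hα
      · exact h
    have := hindep r q (by linear_combination hzero)
    have h012 : ∀ j : Fin 3, j = 0 ∨ j = 1 ∨ j = 2 := by decide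
    rcases h012 i0 with h | h | h <;> rw [h] at hgi0
    · exact hgi0 hp0
    · exact hgi0 this.2
    · exact hgi0 this.1
  -- clear denominators
  set D : ℤ := (p.den : ℤ) * q.den * r.den with hD
  set a₀ : ℤ := p.num * q.den * r.den with ha₀
  set b₀ : ℤ := q.num * p.den * r.den with hb₀
  set c₀ : ℤ := r.num * p.den * q.den with hc₀
  have hnum : ∀ s : ℚ, (s.num : ℚ) = s * (s.den : ℚ) := fun s => by
    have hden : ((s.den : ℚ)) ≠ 0 := by exact_mod_cast s.den_nz
    exact (div_eq_iff hden).mp (Rat.num_div_den s)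
  have hQ1 : (a₀ : ℚ) = p * D := by rw [ha₀, hD]; push_cast; rw [hnum p]; ring
  have hQ2 : (b₀ : ℚ) = q * D := by rw [hb₀, hD]; push_cast; rw [hnum q]; ring
  have hQ3 : (c₀ : ℚ) = r * D := by rw [hc₀, hD]; push_cast; rw [hnum r]; ring
  have hM1 : ((a₀ : ℤ) : M) = (p : M) * ((D : ℤ) : M) := by exact_mod_cast congrArg (fun t : ℚ => (t : M)) hQ1
  have hM2 : ((b₀ : ℤ) : M) = (q : M) * ((D : ℤ) : M) := by exact_mod_cast congrArg (fun t : ℚ => (t : M)) hQ2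
  have hM3 : ((c₀ : ℤ) : M) = (r : M) * ((D : ℤ) : M) := by exact_mod_cast congrArg (fun t : ℚ => (t : M)) hQ3
  have hrel₀ : (a₀ : M) * β ^ 2 + (b₀ : M) * (α * β) + (c₀ : M) * α ^ 2 = 0 := by
    rw [hM1, hM2, hM3]
    linear_combination ((D : ℤ) : M) * hgsum
  have ha₀ne : a₀ ≠ 0 := by
    rw [ha₀]
    exact mul_ne_zero (mul_ne_zero (Rat.num_ne_zero.mpr hpne) (by exact_mod_cast q.den_nz))
      (by exact_mod_cast r.den_nz)
  -- divide by the gcd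
  set d : ℕ := Int.gcd (Int.gcd a₀ b₀) c₀ with hd
  have hdvd_ab : (d : ℤ) ∣ Int.gcd a₀ b₀ := Int.gcd_dvd_left _ _
  have hdvd_a : (d : ℤ) ∣ a₀ := hdvd_ab.trans (Int.gcd_dvd_left _ _)
  have hdvd_b : (d : ℤ) ∣ b₀ := hdvd_ab.trans (Int.gcd_dvd_right _ _)
  have hdvd_c : (d : ℤ) ∣ c₀ := Int.gcd_dvd_right _ _
  have hdne : (d : ℤ) ≠ 0 := by
    simp only [hd, ne_eq, Int.natCast_eq_zero, Int.gcd_eq_zero_iff, not_and]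
    intro h
    exact absurd h.1 ha₀ne
  obtain ⟨a, ha⟩ := hdvd_a
  obtain ⟨b, hb⟩ := hdvd_b
  obtain ⟨c, hc⟩ := hdvd_c
  refine ⟨a, b, c, ?_, ?_⟩
  · have h1 : Int.gcd a₀ b₀ = d * Int.gcd a b := by
      rw [ha, hb, Int.gcd_mul_left]
      simp
    have h2 : (d : ℕ) = d * Int.gcd (Int.gcd a b) c := by
      conv_lhs => rw [hd, hc]
      rw [h1]
      push_cast
      rw [Int.gcd_mul_left]
      simp
    have hdnat : d ≠ 0 := by exact_mod_cast hdne
    nth_rewrite 1 [show (d : ℕ) = d * 1 by ring] at h2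
    exact (Nat.eq_of_mul_eq_mul_left (Nat.pos_of_ne_zero hdnat) h2).symm
  · have hdM : ((d : ℤ) : M) ≠ 0 := Int.cast_ne_zero.mpr hdne
    have := hrel₀
    rw [ha, hb, hc] at this
    push_cast at this
    apply mul_left_cancel₀ hdM
    rw [mul_zero]
    push_cast
    linear_combination this

theorem aux_bezout3 {a b c : ℤ} (h : Int.gcd (Int.gcd a b) c = 1) :
    ∃ u v w : ℤ, u * a + v * b + w * c = 1 := by
  have h1 := Int.gcd_eq_gcd_ab (Int.gcd a b : ℤ) c
  rw [h] at h1
  have h2 := Int.gcd_eq_gcd_ab a b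
  refine ⟨(Int.gcdA a b) * (Int.gcdA (Int.gcd a b : ℤ) c),
    (Int.gcdB a b) * (Int.gcdA (Int.gcd a b : ℤ) c),
    Int.gcdB (Int.gcd a b : ℤ) c, ?_⟩
  have : ((1 : ℕ) : ℤ) = 1 := rfl
  rw [this] at h1
  calc _ = (a * Int.gcdA a b + b * Int.gcdB a b) * Int.gcdA (Int.gcd a b : ℤ) c
      + c * Int.gcdB (Int.gcd a b : ℤ) c := by ring
  _ = (Int.gcd a b : ℤ) * Int.gcdA (Int.gcd a b : ℤ) c
      + c * Int.gcdB (Int.gcd a b : ℤ) c := by rw [← h2]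
  _ = 1 := h1.symm

theorem aux_mul_span_pair_mem {α β t : M} {𝔞 : Submodule ℤ M}
    (hA : t * α ∈ 𝔞) (hB : t * β ∈ 𝔞) :
    ∀ x ∈ Submodule.span ℤ ({α, β} : Set M), t * x ∈ 𝔞 := by
  intro x hx
  induction hx using Submodule.span_induction with
  | mem z hz =>
    rcases hz with h | h
    · rw [h]; exact hA
    · rw [Set.mem_singleton_iff] at h; rw [h]; exact hB
  | zero => simpa using 𝔞.zero_mem
  | add y z _ _ ihy ihz => rw [mul_add]; exact 𝔞.add_mem ihy ihz
  | smul k y _ ihy =>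
    have : t * (k • y) = k • (t * y) := by
      rw [zsmul_eq_mul, zsmul_eq_mul]; ring
    rw [this]
    exact Submodule.smul_mem _ k ihy

theorem aux_mul_span_pair_subring {α β t : M} {O : Subring M}
    (hA : t * α ∈ O) (hB : t * β ∈ O) :
    ∀ x ∈ Submodule.span ℤ ({α, β} : Set M), t * x ∈ O := by
  intro x hx
  induction hx using Submodule.span_induction with
  | mem z hz =>
    rcases hz with h | h
    · rw [h]; exact hA
    · rw [Set.mem_singleton_iff] at h; rw [h]; exact hB
  | zero => simpa using O.zero_mem
  | add y z _ _ ihy ihz => rw [mul_add]; exact O.add_mem ihy ihz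
  | smul k y _ ihy =>
    have : t * (k • y) = (k : M) * (t * y) := by
      rw [zsmul_eq_mul]; ring
    rw [this]
    exact O.mul_mem (intCast_mem O k) ihy

theorem aux_proper_to_inv (hdeg : Module.finrank ℚ M = 2) {O : Subring M}
    {𝔞 : Submodule ℤ M} (hfg : 𝔞.FG) (hspan : Submodule.span ℚ (𝔞 : Set M) = ⊤)
    (hproper : multiplierRing M 𝔞 = O) :
    HasInvData O 𝔞 := by
  obtain ⟨α, β, h𝔞, hindep⟩ := aux_lattice_basis hdeg hfg hspan
  obtain ⟨a, b, c, hcop, hrel⟩ := aux_quadratic hdeg hindep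
  obtain ⟨u, v, w, hbez⟩ := aux_bezout3 hcop
  have hα : α ≠ 0 := by
    intro h0
    have := hindep 1 0 (by rw [h0]; push_cast; ring)
    simp at this
  have hcomb : ∀ m n : ℤ, (m : M) * α + (n : M) * β ∈ 𝔞 := by
    intro m n
    rw [h𝔞]
    apply Submodule.add_mem
    · rw [← zsmul_eq_mul]
      exact Submodule.smul_mem _ m (Submodule.subset_span (Set.mem_insert _ _))
    · rw [← zsmul_eq_mul]
      exact Submodule.smul_mem _ n
        (Submodule.subset_span (Set.mem_insert_of_mem _ (Set.mem_singleton _)))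
  have hαm : α ∈ 𝔞 := by simpa using hcomb 1 0
  have hβm : β ∈ 𝔞 := by simpa using hcomb 0 1
  -- the element aβ/α lies in the multiplier ring, hence in O
  have htO : (a : M) * β / α ∈ O := by
    rw [← hproper, mem_multiplierRing]
    have hA : (a : M) * β / α * α ∈ 𝔞 := by
      have hid : (a : M) * β / α * α = (a : M) * β + (0 : M) * α := by field_simp; ring
      rw [hid]
      simpa using hcomb 0 a
    have hB : (a : M) * β / α * β ∈ 𝔞 := by
      have hid : (a : M) * β / α * β = (-(c : M)) * α + (-(b : M)) * β := by
        field_simp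
        linear_combination hrel
      rw [hid]
      have := hcomb (-c) (-b)
      push_cast at this
      exact this
    intro x hx
    exact aux_mul_span_pair_mem hA hB x (h𝔞 ▸ hx)
  -- the two "inverse" elements
  set q₁ : M := (a : M) / α with hq₁
  set q₂ : M := -((b : M) * α + (a : M) * β) / α ^ 2 with hq₂
  have hq₁O : ∀ y ∈ 𝔞, q₁ * y ∈ O := by
    have hA : q₁ * α ∈ O := by
      have hid : q₁ * α = (a : M) := by rw [hq₁]; field_simp
      rw [hid]; exact intCast_mem O a
    have hB : q₁ * β ∈ O := by
      have hid : q₁ * β = (a : M) * β / α := by rw [hq₁]; field_simp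
      rw [hid]; exact htO
    intro y hy
    exact aux_mul_span_pair_subring hA hB y (h𝔞 ▸ hy)
  have hq₂O : ∀ y ∈ 𝔞, q₂ * y ∈ O := by
    have hA : q₂ * α ∈ O := by
      have hid : q₂ * α = -(b : M) + -((a : M) * β / α) := by
        rw [hq₂]; field_simp; ring
      rw [hid]
      exact O.add_mem (O.neg_mem (intCast_mem O b)) (O.neg_mem htO)
    have hB : q₂ * β ∈ O := by
      have hid : q₂ * β = (c : M) := by
        rw [hq₂]; field_simp
        linear_combination -hrel
      rw [hid]; exact intCast_mem O c
    intro y hy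
    exact aux_mul_span_pair_subring hA hB y (h𝔞 ▸ hy)
  -- assemble
  have hx₁ : (u : M) * α + (-v : M) * β ∈ 𝔞 := by
    have := hcomb u (-v); push_cast at this ⊢; exact this
  have hx₂ : (-v : M) * α + (w : M) * β ∈ 𝔞 := by
    have := hcomb (-v) w; push_cast at this ⊢; exact this
  refine ⟨2, ![(u : M) * α + (-v : M) * β, (-v : M) * α + (w : M) * β], ![q₁, q₂], ?_, ?_, ?_⟩
  · intro i
    fin_cases i
    · exact hx₁
    · exact hx₂
  · intro i
    fin_cases i
    · exact hq₁O
    · exact hq₂O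
  · rw [Fin.sum_univ_two]
    simp only [Matrix.cons_val_zero, Matrix.cons_val_one, Matrix.head_cons]
    rw [hq₁, hq₂]
    have hbezM : ((u : M)) * a + (v : M) * b + (w : M) * c = 1 := by
      exact_mod_cast congrArg (fun t : ℤ => (t : M)) hbez
    push_cast
    field_simp
    linear_combination α ^ 2 * hbezM - (w : M) * hrel

theorem aux_inv_to_loc {O : Subring M} {𝔞 : Submodule ℤ M}
    (hstab : ∀ r ∈ O, ∀ x ∈ 𝔞, r * x ∈ 𝔞) (hinv : HasInvData O 𝔞)
    (𝔪 : Ideal O) (h𝔪 : 𝔪.IsMaximal) :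
    (⊤ : Submodule (Localization (@Ideal.primeCompl _ _ 𝔪 h𝔪.isPrime))
      (LocalizedModule (@Ideal.primeCompl _ _ 𝔪 h𝔪.isPrime)
        (idealModule M O 𝔞 hstab))).IsPrincipal := by
  classical
  haveI := h𝔪.isPrime
  obtain ⟨n, x, q, hx, hq, hsum⟩ := hinv
  set r : Fin n → O := fun i => ⟨q i * x i, hq i (x i) (hx i)⟩ with hr
  have hsumO : (∑ i, r i) = (1 : O) := by
    apply Subtype.ext
    push_cast [hr]
    exact hsum
  have hex : ∃ i, r i ∉ 𝔪 := by
    by_contra h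
    push_neg at h
    have : (1 : O) ∈ 𝔪 := hsumO ▸ Ideal.sum_mem 𝔪 fun i _ => h i
    exact h𝔪.ne_top (Ideal.eq_top_of_isUnit_mem 𝔪 this isUnit_one)
  obtain ⟨i, hri⟩ := hex
  set g : LocalizedModule 𝔪.primeCompl (idealModule M O 𝔞 hstab) :=
    LocalizedModule.mk ⟨x i, hx i⟩ 1 with hg
  refine ⟨⟨g, ?_⟩⟩
  apply le_antisymm _ le_top
  intro m _
  induction m using LocalizedModule.induction_on with
  | h y s =>
    rw [Submodule.mem_span_singleton]
    refine ⟨Localization.mk ⟨q i * (y : M), hq i _ y.2⟩ (s * ⟨r i, hri⟩), ?_⟩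
    rw [hg, LocalizedModule.mk_smul_mk]
    rw [LocalizedModule.mk_eq]
    refine ⟨1, ?_⟩
    apply Subtype.ext
    simp only [one_smul, Submonoid.smul_def, SetLike.val_smul, Subring.smul_def,
      Submonoid.coe_mul, smul_eq_mul]
    push_cast
    ring

theorem aux_loc_to_proj {O : Subring M} (hOfin : Module.Finite ℤ O)
    {𝔞 : Submodule ℤ M} (hfg : 𝔞.FG)
    (hstab : ∀ r ∈ O, ∀ x ∈ 𝔞, r * x ∈ 𝔞)
    (hloc : ∀ (𝔪 : Ideal O) (h𝔪 : 𝔪.IsMaximal),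
      (⊤ : Submodule (Localization (@Ideal.primeCompl _ _ 𝔪 h𝔪.isPrime))
        (LocalizedModule (@Ideal.primeCompl _ _ 𝔪 h𝔪.isPrime)
          (idealModule M O 𝔞 hstab))).IsPrincipal) :
    Module.Projective O (idealModule M O 𝔞 hstab) := by
  classical
  -- O is a Noetherian ring
  haveI : IsNoetherian ℤ O := isNoetherian_of_isNoetherianRing_of_finite ℤ O
  haveI : IsNoetherianRing O := isNoetherian_of_tower ℤ (by infer_instance)
  -- the module is finite over O
  haveI h𝔞fin : Module.Finite ℤ ↥𝔞 := Module.Finite.iff_fg.mpr hfg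
  haveI : Module.Finite ℤ (idealModule M O 𝔞 hstab) := by
    let f : ↥𝔞 →+ (idealModule M O 𝔞 hstab) :=
      { toFun := fun x => ⟨x.1, x.2⟩
        map_zero' := rfl
        map_add' := fun x y => rfl }
    exact Module.Finite.of_surjective f.toIntLinearMap fun y => ⟨⟨y.1, y.2⟩, rfl⟩
  haveI : Module.Finite O (idealModule M O 𝔞 hstab) :=
    Module.Finite.of_restrictScalars_finite ℤ O (idealModule M O 𝔞 hstab)
  haveI : Module.FinitePresentation O (idealModule M O 𝔞 hstab) :=
    Module.finitePresentation_of_finite O (idealModule M O 𝔞 hstab)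
  apply Module.projective_of_localization_maximal
  intro 𝔪 h𝔪
  haveI := h𝔪.isPrime
  obtain ⟨g, hg⟩ := hloc 𝔪 h𝔪
  -- the localized module is torsion-free
  have htf : ∀ (a : Localization 𝔪.primeCompl)
      (m : LocalizedModule 𝔪.primeCompl (idealModule M O 𝔞 hstab)),
      a • m = 0 → a = 0 ∨ m = 0 := by
    intro a m ham
    induction a using Localization.induction_on with
    | H p =>
      obtain ⟨u, t⟩ := p
      induction m using LocalizedModule.induction_on with
      | h y s =>
        rw [LocalizedModule.mk_smul_mk] at ham
        rw [← LocalizedModule.zero_mk (t * s), LocalizedModule.mk_eq] at ham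
        obtain ⟨c, hc⟩ := ham
        have hc' := congrArg (fun w : (idealModule M O 𝔞 hstab) => (w : M)) hc
        simp only [Submonoid.smul_def, SetLike.val_smul, Subring.smul_def, smul_zero,
          Submonoid.coe_mul, ZeroMemClass.coe_zero, smul_eq_mul, mul_zero] at hc'
        -- hc' : ↑c * (↑(t*s) * (↑u * ↑y)) = 0
        have hcne : ((c : O) : M) ≠ 0 := fun h0 => c.2 (by
          have : (c : O) = 0 := Subtype.ext h0
          rw [this]; exact 𝔪.zero_mem)
        have htne : ((t : O) : M) ≠ 0 := fun h0 => t.2 (by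
          have : (t : O) = 0 := Subtype.ext h0
          rw [this]; exact 𝔪.zero_mem)
        have hsne : ((s : O) : M) ≠ 0 := fun h0 => s.2 (by
          have : (s : O) = 0 := Subtype.ext h0
          rw [this]; exact 𝔪.zero_mem)
        rcases mul_eq_zero.mp hc' with h | h
        · exact absurd h hcne
        rcases mul_eq_zero.mp h with h | h
        · exact absurd h (by
            push_cast
            exact mul_ne_zero htne hsne)
        rcases mul_eq_zero.mp h with h | h
        · left
          rw [Localization.mk_eq_mk']
          rw [IsLocalization.mk'_eq_zero_iff]
          exact ⟨1, by simpa using Subtype.ext h⟩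
        · right
          rw [← LocalizedModule.zero_mk s]
          congr 1
          exact Subtype.ext h
  by_cases hg0 : g = 0
  · haveI : Subsingleton (LocalizedModule 𝔪.primeCompl (idealModule M O 𝔞 hstab)) := by
      constructor
      intro a b
      have ha : a ∈ (⊤ : Submodule (Localization 𝔪.primeCompl) _) := trivial
      have hb : b ∈ (⊤ : Submodule (Localization 𝔪.primeCompl) _) := trivial
      rw [hg, hg0, Submodule.mem_span_singleton] at ha hb
      obtain ⟨x, rfl⟩ := ha
      obtain ⟨y, rfl⟩ := hb
      simp
    exact Module.projective_def.mpr ⟨0, fun x => Subsingleton.elim _ _⟩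
  · -- free of rank one
    have hbij : Function.Bijective (LinearMap.toSpanSingleton (Localization 𝔪.primeCompl) _ g) := by
      constructor
      · rw [injective_iff_map_eq_zero]
        intro a ha
        rcases htf a g ha with h | h
        · exact h
        · exact absurd h hg0
      · intro m
        have : m ∈ (⊤ : Submodule (Localization 𝔪.primeCompl) _) := trivial
        rw [hg, Submodule.mem_span_singleton] at this
        obtain ⟨x, hx⟩ := this
        exact ⟨x, hx⟩
    exact Module.Projective.of_equiv (LinearEquiv.ofBijective _ hbij)

end Aux

/-- Let `M` be an imaginary quadratic field, `O` an order of `M` and `𝔞` a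
`ℤ`-lattice in `M` with `O·𝔞 ⊆ 𝔞`.  The following are equivalent: (1) `𝔞` is projective as an
`O`-module; (2) `𝔞` is locally principal: for every maximal ideal `𝔪` of `O` the localization
`𝔞_𝔪` is a principal `O_𝔪`-module; (3) `𝔞` is a proper `O`-ideal: `{α : α𝔞 ⊆ 𝔞} = O`. -/
theorem projective_iff_locallyPrincipal_iff_proper
    (hdeg : Module.finrank ℚ M = 2) (himag : IsEmpty (M →+* ℝ))
    (O : Subring M) (hOfin : Module.Finite ℤ O)
    (hOspan : Submodule.span ℚ (O : Set M) = ⊤)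
    (𝔞 : Submodule ℤ M) (hfg : 𝔞.FG) (hspan : Submodule.span ℚ (𝔞 : Set M) = ⊤)
    (hstab : ∀ r ∈ O, ∀ x ∈ 𝔞, r * x ∈ 𝔞) :
    List.TFAE
      [ Module.Projective O (idealModule M O 𝔞 hstab),
        ∀ (𝔪 : Ideal O) (h𝔪 : 𝔪.IsMaximal),
          (⊤ : Submodule (Localization (@Ideal.primeCompl _ _ 𝔪 h𝔪.isPrime))
            (LocalizedModule (@Ideal.primeCompl _ _ 𝔪 h𝔪.isPrime)
              (idealModule M O 𝔞 hstab))).IsPrincipal,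
        multiplierRing M 𝔞 = O ] := by
  tfae_have 1 → 3 := fun h => aux_inv_to_proper hstab (aux_proj_to_inv hOspan hspan hstab h)
  tfae_have 3 → 2 := fun h 𝔪 h𝔪 =>
    aux_inv_to_loc hstab (aux_proper_to_inv hdeg hfg hspan h) 𝔪 h𝔪
  tfae_have 2 → 1 := fun h => aux_loc_to_proj hOfin hfg hstab h
  tfae_finish
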